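/- arXiv:2405.20504 — 3 statements merged into one kernel-verified Lean document; each statement's English description precedes it below -/
import Mathlib

section
/- Let A and B be positive definite real symmetric d×d matrices with A - B positive semidefinite (i.e., A ⪰ B), and let γ ≥ 1. If det(A) ≤ γ·det(B), then for every vector x, xᵀB⁻¹x ≤ γ·(xᵀA⁻¹x). -/
open Matrix

-- symmetric move of a real hermitian matrix across dotProduct
private lemma dot_herm {n : Type*} [Fintype n] {S : Matrix n n ℝ} (h : S.IsHermitian)
    (v w : n → ℝ) : v ⬝ᵥ S *ᵥ w = (S *ᵥ v) ⬝ᵥ w := by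
  rw [dotProduct_mulVec, ← mulVec_transpose, ← conjTranspose_eq_transpose_of_trivial, h.eq]

open scoped MatrixOrder in
private lemma exists_sqrt_herm {d : ℕ} (A : Matrix (Fin d) (Fin d) ℝ) (hA : A.PosDef) :
    ∃ S : Matrix (Fin d) (Fin d) ℝ, S.IsHermitian ∧ S * S = A :=
  ⟨CFC.sqrt A, (CFC.sqrt_nonneg A).posSemidef.1, CFC.sqrt_mul_sqrt_self A hA.posSemidef.nonneg⟩

theorem stale_inverse_quadratic_form_bound {d : ℕ}
    (A B : Matrix (Fin d) (Fin d) ℝ) (γ : ℝ)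
    (hA : A.PosDef) (hB : B.PosDef) (hAB : (A - B).PosSemidef)
    (hγ : 1 ≤ γ) (hdet : A.det ≤ γ * B.det) :
    ∀ x : Fin d → ℝ, x ⬝ᵥ B⁻¹.mulVec x ≤ γ * (x ⬝ᵥ A⁻¹.mulVec x) := by
  intro x
  have hγ0 : (0:ℝ) < γ := lt_of_lt_of_le one_pos hγ
  obtain ⟨S, hSh', hSS'⟩ := exists_sqrt_herm A hA
  have hSh : S.IsHermitian := hSh'
  have hSS : S * S = A := hSS'
  have hdetS2 : S.det * S.det = A.det := by rw [← det_mul, hSS]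
  have hdetS : S.det ≠ 0 := by
    intro h0; rw [h0, mul_zero] at hdetS2; exact hA.det_pos.ne' hdetS2.symm
  have hSu : IsUnit S.det := hdetS.isUnit
  have hSinv : S * S⁻¹ = 1 := mul_nonsing_inv S hSu
  have hSinv' : S⁻¹ * S = 1 := nonsing_inv_mul S hSu
  have hSinvh : (S⁻¹).IsHermitian := hSh.inv
  -- D = S⁻¹ B S⁻¹
  set D := S⁻¹ * B * S⁻¹ with hDdef
  have hDpd : D.PosDef := by
    refine posDef_iff_dotProduct_mulVec.mpr ⟨?_, ?_⟩
    · rw [hDdef]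
      nth_rewrite 2 [← hSinvh.eq]
      exact isHermitian_mul_mul_conjTranspose _ hB.1
    · intro v hv
      have hv' : S⁻¹ *ᵥ v ≠ 0 := by
        intro h0
        apply hv
        have := congrArg (S *ᵥ ·) h0
        simpa [mulVec_mulVec, hSinv] using this
      have h2 := hB.dotProduct_mulVec_pos hv'
      simp only [star_trivial] at h2 ⊢
      calc 0 < (S⁻¹ *ᵥ v) ⬝ᵥ B *ᵥ (S⁻¹ *ᵥ v) := h2
        _ = v ⬝ᵥ D *ᵥ v := by
            rw [← dot_herm hSinvh, hDdef, ← mulVec_mulVec, ← mulVec_mulVec]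
  -- 1 - D is PSD
  have hIDpsd : ((1 : Matrix (Fin d) (Fin d) ℝ) - D).PosSemidef := by
    have hSAS : S⁻¹ * A * S⁻¹ = 1 := by
      rw [← hSS, ← Matrix.mul_assoc, hSinv', Matrix.one_mul, hSinv]
    have h1 : (1 : Matrix (Fin d) (Fin d) ℝ) - D = S⁻¹ * (A - B) * (S⁻¹)ᴴ := by
      rw [hSinvh.eq, Matrix.mul_sub, Matrix.sub_mul, hSAS, hDdef]
    rw [h1]
    exact hAB.mul_mul_conjTranspose_same _
  -- eigenvalues of D
  have hDh : D.IsHermitian := hDpd.1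
  set μ := hDh.eigenvalues with hμdef
  have hμpos : ∀ i, 0 < μ i := hDpd.eigenvalues_pos
  have hμle1 : ∀ i, μ i ≤ 1 := by
    intro i
    set v : Fin d → ℝ := ⇑(hDh.eigenvectorBasis i) with hvdef
    have hev : D *ᵥ v = μ i • v := hDh.mulVec_eigenvectorBasis i
    have heq : μ i = v ⬝ᵥ (D *ᵥ v) := by
      simpa [star_trivial] using hDh.eigenvalues_eq i
    have hvv : v ⬝ᵥ v = 1 := by
      have h2 : μ i = μ i * (v ⬝ᵥ v) := by
        nth_rewrite 1 [heq]
        rw [hev, dotProduct_smul, smul_eq_mul]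
      exact (mul_left_cancel₀ (hμpos i).ne' (by rw [mul_one, ← h2])).symm
    have h3 := hIDpsd.re_dotProduct_nonneg v
    simp only [star_trivial, RCLike.re_to_real] at h3
    rw [sub_mulVec, one_mulVec, dotProduct_sub, hev, dotProduct_smul, smul_eq_mul, hvv,
      mul_one] at h3
    linarith
  have hdetD : D.det = B.det / A.det := by
    have h1 : D.det = S⁻¹.det * B.det * S⁻¹.det := by rw [hDdef, det_mul, det_mul]
    rw [h1, det_nonsing_inv, Ring.inverse_eq_inv]
    field_simp [← hdetS2]
    rw [← hdetS2]; ring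
  have hdetDγ : γ⁻¹ ≤ D.det := by
    rw [hdetD, le_div_iff₀ hA.det_pos, inv_mul_le_iff₀ hγ0]
    linarith [hdet]
  have hμγ : ∀ i, γ⁻¹ ≤ μ i := by
    intro i
    have hprod : D.det = ∏ j, μ j := by
      simpa using hDh.det_eq_prod_eigenvalues
    have h2 : ∏ j, μ j ≤ μ i := by
      rw [← Finset.mul_prod_erase Finset.univ μ (Finset.mem_univ i)]
      nth_rewrite 2 [← mul_one (μ i)]
      exact mul_le_mul_of_nonneg_left
        (Finset.prod_le_one (fun j _ => (hμpos j).le) (fun j _ => hμle1 j)) (hμpos i).le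
    calc γ⁻¹ ≤ D.det := hdetDγ
      _ = ∏ j, μ j := hprod
      _ ≤ μ i := h2
  -- spectral decomposition of D and of its inverse
  set U : Matrix (Fin d) (Fin d) ℝ := ↑(hDh.eigenvectorUnitary) with hUdef
  have hUU : star U * U = 1 := hDh.eigenvectorUnitary.2.1
  have hUU' : U * star U = 1 := hDh.eigenvectorUnitary.2.2
  have key : ∀ (P Q : Matrix (Fin d) (Fin d) ℝ),
      (U * P * star U) * (U * Q * star U) = U * (P * Q) * star U := by
    intro P Q
    calc (U * P * star U) * (U * Q * star U)
        = U * (P * ((star U * U) * (Q * star U))) := by simp only [Matrix.mul_assoc]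
      _ = U * (P * Q) * star U := by rw [hUU, Matrix.one_mul]; simp only [Matrix.mul_assoc]
  have hspec : D = U * diagonal μ * star U := by
    have h := hDh.spectral_theorem
    simpa [RCLike.ofReal_real_eq_id] using h
  have hDinv : D⁻¹ = U * diagonal (fun i => (μ i)⁻¹) * star U := by
    apply inv_eq_right_inv
    rw [hspec, key, diagonal_mul_diagonal]
    have : (fun i => μ i * (μ i)⁻¹) = fun _ => (1:ℝ) := by
      funext i; exact mul_inv_cancel₀ (hμpos i).ne'
    rw [this, diagonal_one, Matrix.mul_one, hUU']
  have hPSD : (γ • (1 : Matrix (Fin d) (Fin d) ℝ) - D⁻¹).PosSemidef := by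
    have hdiag : (diagonal (fun i => γ - (μ i)⁻¹)).PosSemidef := by
      refine posSemidef_diagonal_iff.mpr fun i => sub_nonneg.mpr ?_
      rw [inv_le_comm₀ (hμpos i) hγ0]
      exact hμγ i
    have heq2 : γ • (1 : Matrix (Fin d) (Fin d) ℝ) - D⁻¹
        = U * diagonal (fun i => γ - (μ i)⁻¹) * Uᴴ := by
      rw [← Matrix.star_eq_conjTranspose]
      have h1 : diagonal (fun i => γ - (μ i)⁻¹)
          = γ • (1 : Matrix (Fin d) (Fin d) ℝ) - diagonal (fun i => (μ i)⁻¹) := by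
        rw [smul_one_eq_diagonal, ← diagonal_sub]
      rw [h1, Matrix.mul_sub, Matrix.sub_mul, hDinv, Matrix.mul_smul, Matrix.smul_mul,
        Matrix.mul_one, hUU']
    rw [heq2]
    exact hdiag.mul_mul_conjTranspose_same U
  -- assemble
  set y := S⁻¹ *ᵥ x with hydef
  have hApow : A⁻¹ = S⁻¹ * S⁻¹ := by rw [← hSS, Matrix.mul_inv_rev]
  have hBeq : B = S * D * S := by
    rw [hDdef]
    calc B = (S * S⁻¹) * B * (S⁻¹ * S) := by rw [hSinv, hSinv', Matrix.one_mul, Matrix.mul_one]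
      _ = S * (S⁻¹ * B * S⁻¹) * S := by simp only [Matrix.mul_assoc]
  have hBinv : B⁻¹ = S⁻¹ * D⁻¹ * S⁻¹ := by
    rw [hBeq, Matrix.mul_inv_rev, Matrix.mul_inv_rev, Matrix.mul_assoc]
  have hxB : x ⬝ᵥ B⁻¹ *ᵥ x = y ⬝ᵥ D⁻¹ *ᵥ y := by
    rw [hBinv, ← mulVec_mulVec, ← mulVec_mulVec, dot_herm hSinvh, hydef, mulVec_mulVec]
  have hxA : x ⬝ᵥ A⁻¹ *ᵥ x = y ⬝ᵥ y := by
    rw [hApow, ← mulVec_mulVec, dot_herm hSinvh, hydef]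
  have h0 := hPSD.re_dotProduct_nonneg y
  simp only [star_trivial, RCLike.re_to_real] at h0
  rw [sub_mulVec, smul_mulVec, one_mulVec, dotProduct_sub, dotProduct_smul,
    smul_eq_mul] at h0
  show x ⬝ᵥ B⁻¹ *ᵥ x ≤ γ * (x ⬝ᵥ A⁻¹ *ᵥ x)
  rw [hxB, hxA]
  linarith
end

section
/- Let q*, q̂, c*, ĉ be vectors, X a matrix, and A, D positive definite matrices of compatible dimensions. Suppose ‖q̂ − q*‖_A ≤ α_q and ‖ĉ − c*‖_D ≤ α_c, where ‖z‖_M = √(zᵀMz). Then |ĉᵀXᵀq̂ − c*ᵀXᵀq*| ≤ α_c·√(q̂ᵀ X D⁻¹ Xᵀ q̂) + α_q·√(c*ᵀ Xᵀ A⁻¹ X c*) + ‖q̂ − q*‖_A · ‖(c* − ĉ)ᵀXᵀ‖_{A⁻¹}, and in particular when the cross term is absorbed (e.g., c* = ĉ in the second factor), the prediction error |ŷ − y*| for y* = c*ᵀXᵀq* and ŷ = ĉᵀXᵀq̂ is bounded by α_c·√(q̂ᵀ X D⁻¹ Xᵀ q̂) + α_q·√(ĉᵀ Xᵀ A⁻¹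 X ĉ) + α_q·α_c·‖Xᵀ‖·‖A⁻¹‖^{1/2}·‖D⁻¹‖^{1/2}. -/
open Matrix RealInnerProductSpace

attribute [local instance] Matrix.instL2OpNormedAddCommGroup

/-- The weighted norm `‖z‖_M = √(zᵀ M z)`. -/
noncomputable def wnorm {k : ℕ} (M : Matrix (Fin k) (Fin k) ℝ) (z : Fin k → ℝ) : ℝ :=
  Real.sqrt (z ⬝ᵥ M.mulVec z)

lemma wnorm_nonneg {k : ℕ} (M : Matrix (Fin k) (Fin k) ℝ) (z : Fin k → ℝ) :
    0 ≤ wnorm M z := Real.sqrt_nonneg _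

lemma wnorm_neg {k : ℕ} (M : Matrix (Fin k) (Fin k) ℝ) (z : Fin k → ℝ) :
    wnorm M (-z) = wnorm M z := by
  simp [wnorm, Matrix.mulVec_neg]

/-- generalized Cauchy–Schwarz -/
lemma gcs {k : ℕ} {M : Matrix (Fin k) (Fin k) ℝ} (hM : M.PosDef) (u v : Fin k → ℝ) :
    |u ⬝ᵥ v| ≤ wnorm M u * wnorm M⁻¹ v := by
  have hMt : Mᵀ = M := by
    have h := hM.isHermitian.eq
    rwa [Matrix.conjTranspose_eq_transpose_of_trivial] at h
  have hMinv : M * M⁻¹ = 1 := Matrix.mul_nonsing_inv _ hM.det_pos.ne'.isUnit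
  set w := M⁻¹.mulVec v with hw
  have hsym : ∀ x y : Fin k → ℝ, x ⬝ᵥ M.mulVec y = (M.mulVec x) ⬝ᵥ y := by
    intro x y
    rw [Matrix.dotProduct_mulVec]
    conv_lhs => rw [← hMt, Matrix.vecMul_transpose]
  have hMw : M.mulVec w = v := by
    rw [hw, Matrix.mulVec_mulVec, hMinv, Matrix.one_mulVec]
  set a := v ⬝ᵥ M⁻¹.mulVec v with ha
  set b := u ⬝ᵥ v with hb
  set c := u ⬝ᵥ M.mulVec u with hc
  have ha0 : 0 ≤ a := hM.inv.posSemidef.re_dotProduct_nonneg v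
  have hc0 : 0 ≤ c := hM.posSemidef.re_dotProduct_nonneg u
  have key : ∀ t : ℝ, 0 ≤ a * (t * t) + (2 * b) * t + c := by
    intro t
    have h0 : 0 ≤ (u + t • w) ⬝ᵥ M.mulVec (u + t • w) :=
      hM.posSemidef.re_dotProduct_nonneg _
    have h1 : u ⬝ᵥ M.mulVec w = b := by rw [hMw]
    have h2 : w ⬝ᵥ M.mulVec u = b := by rw [hsym, hMw, dotProduct_comm]
    have h3 : w ⬝ᵥ M.mulVec w = a := by
      rw [hsym, hMw]
    have expand : (u + t • w) ⬝ᵥ M.mulVec (u + t • w)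
        = a * (t * t) + (2 * b) * t + c := by
      simp only [Matrix.mulVec_add, Matrix.mulVec_smul, dotProduct_add,
        add_dotProduct, dotProduct_smul, smul_dotProduct,
        smul_eq_mul, h1, h2, h3, ← hc]
      ring
    linarith [expand ▸ h0]
  have hd : discrim a (2 * b) c ≤ 0 := discrim_le_zero key
  rw [discrim] at hd
  have hbac : b ^ 2 ≤ c * a := by nlinarith
  calc |b| = Real.sqrt (b ^ 2) := (Real.sqrt_sq_eq_abs b).symm
    _ ≤ Real.sqrt (c * a) := Real.sqrt_le_sqrt hbac
    _ = Real.sqrt c * Real.sqrt a := Real.sqrt_mul hc0 a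
    _ = wnorm M u * wnorm M⁻¹ v := rfl

lemma wnorm_mulVec {k l : ℕ} (M : Matrix (Fin l) (Fin l) ℝ)
    (N : Matrix (Fin l) (Fin k) ℝ) (x : Fin k → ℝ) :
    wnorm M (N.mulVec x) = Real.sqrt (x ⬝ᵥ (Nᵀ * M * N).mulVec x) := by
  unfold wnorm
  congr 1
  have h : (Nᵀ * M * N).mulVec x = Nᵀ.mulVec (M.mulVec (N.mulVec x)) := by
    simp [Matrix.mulVec_mulVec, Matrix.mul_assoc]
  rw [h, Matrix.dotProduct_mulVec x Nᵀ, Matrix.vecMul_transpose]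

lemma quad_le {k : ℕ} (M : Matrix (Fin k) (Fin k) ℝ) (v : Fin k → ℝ) :
    v ⬝ᵥ M.mulVec v ≤ ‖M‖ * (v ⬝ᵥ v) := by
  set v' : EuclideanSpace ℝ (Fin k) := (EuclideanSpace.equiv (Fin k) ℝ).symm v
  set Mv' : EuclideanSpace ℝ (Fin k) := (EuclideanSpace.equiv (Fin k) ℝ).symm (M.mulVec v)
  have h1 : v ⬝ᵥ M.mulVec v = ⟪v', Mv'⟫ := by
    simp [v', Mv', PiLp.inner_apply, RCLike.inner_apply, dotProduct, mul_comm]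
  have h2 : ‖v'‖ * ‖v'‖ = v ⬝ᵥ v := by
    rw [← real_inner_self_eq_norm_mul_norm]
    simp [v', PiLp.inner_apply, RCLike.inner_apply, dotProduct, EuclideanSpace.norm_sq_eq, Real.norm_eq_abs, sq_abs, ← pow_two]
  calc v ⬝ᵥ M.mulVec v = ⟪v', Mv'⟫ := h1
    _ ≤ ‖v'‖ * ‖Mv'‖ := real_inner_le_norm _ _
    _ ≤ ‖v'‖ * (‖M‖ * ‖v'‖) := by
        exact mul_le_mul_of_nonneg_left (M.l2_opNorm_mulVec v') (norm_nonneg _)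
    _ = ‖M‖ * (v ⬝ᵥ v) := by rw [← h2]; ring

lemma enorm_le {k : ℕ} {D : Matrix (Fin k) (Fin k) ℝ} (hD : D.PosDef) (v : Fin k → ℝ) :
    Real.sqrt (v ⬝ᵥ v) ≤ Real.sqrt ‖D⁻¹‖ * wnorm D v := by
  have h1 : |v ⬝ᵥ v| ≤ wnorm D v * wnorm D⁻¹ v := gcs hD v v
  have h2 : wnorm D⁻¹ v ≤ Real.sqrt ‖D⁻¹‖ * Real.sqrt (v ⬝ᵥ v) := by
    rw [wnorm, ← Real.sqrt_mul (norm_nonneg _)]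
    exact Real.sqrt_le_sqrt (quad_le _ v)
  set s := Real.sqrt (v ⬝ᵥ v) with hs
  have hvv : 0 ≤ v ⬝ᵥ v :=
    Finset.sum_nonneg fun i _ => mul_self_nonneg _
  have hss : s * s = v ⬝ᵥ v := Real.mul_self_sqrt hvv
  rcases eq_or_lt_of_le (Real.sqrt_nonneg (v ⬝ᵥ v) : (0:ℝ) ≤ s) with h | h
  · have h0 : s = 0 := h.symm
    rw [h0]
    exact mul_nonneg (Real.sqrt_nonneg _) (wnorm_nonneg _ _)
  · have : s * s ≤ wnorm D v * (Real.sqrt ‖D⁻¹‖ * s) := by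
      rw [hss]
      calc v ⬝ᵥ v = |v ⬝ᵥ v| := (abs_of_nonneg hvv).symm
        _ ≤ wnorm D v * wnorm D⁻¹ v := h1
        _ ≤ wnorm D v * (Real.sqrt ‖D⁻¹‖ * s) :=
            mul_le_mul_of_nonneg_left h2 (wnorm_nonneg _ _)
    nlinarith

lemma enorm_eq {j : ℕ} (u : Fin j → ℝ) :
    ‖(EuclideanSpace.equiv (Fin j) ℝ).symm u‖ = Real.sqrt (u ⬝ᵥ u) := by
  rw [EuclideanSpace.norm_eq]
  congr 1
  show ∑ i, ‖u i‖ ^ 2 = ∑ i, u i * u i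
  apply Finset.sum_congr rfl
  intro i _
  rw [Real.norm_eq_abs, sq_abs, pow_two]

theorem bilinear_prediction_error_decomposition {m n : ℕ}
    (qstar qhat : Fin m → ℝ) (cstar chat : Fin n → ℝ)
    (X : Matrix (Fin m) (Fin n) ℝ)
    (A : Matrix (Fin m) (Fin m) ℝ) (D : Matrix (Fin n) (Fin n) ℝ)
    (hA : A.PosDef) (hD : D.PosDef)
    (αq αc : ℝ)
    (hq : wnorm A (qhat - qstar) ≤ αq)
    (hc : wnorm D (chat - cstar) ≤ αc) :
    |chat ⬝ᵥ Xᵀ.mulVec qhat - cstar ⬝ᵥ Xᵀ.mulVec qstar|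
        ≤ αc * Real.sqrt (qhat ⬝ᵥ (X * D⁻¹ * Xᵀ).mulVec qhat)
          + αq * Real.sqrt (cstar ⬝ᵥ (Xᵀ * A⁻¹ * X).mulVec cstar)
          + wnorm A (qhat - qstar) * wnorm A⁻¹ (X.mulVec (cstar - chat)) ∧
    |chat ⬝ᵥ Xᵀ.mulVec qhat - cstar ⬝ᵥ Xᵀ.mulVec qstar|
        ≤ αc * Real.sqrt (qhat ⬝ᵥ (X * D⁻¹ * Xᵀ).mulVec qhat)
          + αq * Real.sqrt (chat ⬝ᵥ (Xᵀ * A⁻¹ * X).mulVec chat)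
          + αq * αc * ‖Xᵀ‖ * ‖A⁻¹‖ ^ ((1 : ℝ) / 2) * ‖D⁻¹‖ ^ ((1 : ℝ) / 2) := by
  have hαq : 0 ≤ αq := le_trans (wnorm_nonneg _ _) hq
  have hαc : 0 ≤ αc := le_trans (wnorm_nonneg _ _) hc
  set z := qhat - qstar with hz
  set w := cstar - chat with hw2
  have hswap : ∀ (c : Fin n → ℝ) (y : Fin m → ℝ),
      c ⬝ᵥ Xᵀ.mulVec y = y ⬝ᵥ X.mulVec c := by
    intro c y
    rw [Matrix.dotProduct_mulVec, Matrix.vecMul_transpose, dotProduct_comm]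
  have hT1 : |(chat - cstar) ⬝ᵥ Xᵀ.mulVec qhat|
      ≤ αc * Real.sqrt (qhat ⬝ᵥ (X * D⁻¹ * Xᵀ).mulVec qhat) := by
    have heq : wnorm D⁻¹ (Xᵀ.mulVec qhat)
        = Real.sqrt (qhat ⬝ᵥ (X * D⁻¹ * Xᵀ).mulVec qhat) := by
      rw [wnorm_mulVec, Matrix.transpose_transpose]
    calc |(chat - cstar) ⬝ᵥ Xᵀ.mulVec qhat|
        ≤ wnorm D (chat - cstar) * wnorm D⁻¹ (Xᵀ.mulVec qhat) := gcs hD _ _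
      _ ≤ αc * Real.sqrt (qhat ⬝ᵥ (X * D⁻¹ * Xᵀ).mulVec qhat) := by
          rw [heq]
          exact mul_le_mul_of_nonneg_right hc (Real.sqrt_nonneg _)
  have hT2 : ∀ c : Fin n → ℝ, |c ⬝ᵥ Xᵀ.mulVec z|
      ≤ αq * Real.sqrt (c ⬝ᵥ (Xᵀ * A⁻¹ * X).mulVec c) := by
    intro c
    rw [hswap]
    have h := gcs hA z (X.mulVec c)
    rw [wnorm_mulVec] at h
    calc |z ⬝ᵥ X.mulVec c|
        ≤ wnorm A z * Real.sqrt (c ⬝ᵥ (Xᵀ * A⁻¹ * X).mulVec c) := h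
      _ ≤ αq * Real.sqrt (c ⬝ᵥ (Xᵀ * A⁻¹ * X).mulVec c) :=
          mul_le_mul_of_nonneg_right hq (Real.sqrt_nonneg _)
  have hXnorm : ‖Xᵀ‖ = ‖X‖ := by
    rw [← X.conjTranspose_eq_transpose_of_trivial]
    exact X.l2_opNorm_conjTranspose
  have h3a : wnorm A⁻¹ (X.mulVec w)
      ≤ Real.sqrt ‖A⁻¹‖ * (‖Xᵀ‖ * (Real.sqrt ‖D⁻¹‖ * αc)) := by
    have s1 : wnorm A⁻¹ (X.mulVec w)
        ≤ Real.sqrt ‖A⁻¹‖ * Real.sqrt ((X.mulVec w) ⬝ᵥ (X.mulVec w)) := by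
      rw [wnorm, ← Real.sqrt_mul (norm_nonneg _)]
      exact Real.sqrt_le_sqrt (quad_le _ _)
    have s2 : Real.sqrt ((X.mulVec w) ⬝ᵥ (X.mulVec w)) ≤ ‖Xᵀ‖ * Real.sqrt (w ⬝ᵥ w) := by
      rw [← enorm_eq, ← enorm_eq, hXnorm]
      exact X.l2_opNorm_mulVec _
    have s3 : Real.sqrt (w ⬝ᵥ w) ≤ Real.sqrt ‖D⁻¹‖ * αc := by
      refine le_trans (enorm_le hD w) ?_
      have hw3 : wnorm D w ≤ αc := by
        rw [hw2, show cstar - chat = -(chat - cstar) from (neg_sub _ _).symm, wnorm_neg]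
        exact hc
      exact mul_le_mul_of_nonneg_left hw3 (Real.sqrt_nonneg _)
    calc wnorm A⁻¹ (X.mulVec w)
        ≤ Real.sqrt ‖A⁻¹‖ * Real.sqrt ((X.mulVec w) ⬝ᵥ (X.mulVec w)) := s1
      _ ≤ Real.sqrt ‖A⁻¹‖ * (‖Xᵀ‖ * Real.sqrt (w ⬝ᵥ w)) :=
          mul_le_mul_of_nonneg_left s2 (Real.sqrt_nonneg _)
      _ ≤ Real.sqrt ‖A⁻¹‖ * (‖Xᵀ‖ * (Real.sqrt ‖D⁻¹‖ * αc)) := by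
          refine mul_le_mul_of_nonneg_left ?_ (Real.sqrt_nonneg _)
          exact mul_le_mul_of_nonneg_left s3 (by rw [hXnorm]; exact norm_nonneg _)
  have hT3 : |w ⬝ᵥ Xᵀ.mulVec z|
      ≤ αq * αc * ‖Xᵀ‖ * ‖A⁻¹‖ ^ ((1 : ℝ) / 2) * ‖D⁻¹‖ ^ ((1 : ℝ) / 2) := by
    rw [hswap]
    calc |z ⬝ᵥ X.mulVec w| ≤ wnorm A z * wnorm A⁻¹ (X.mulVec w) := gcs hA _ _
      _ ≤ αq * (Real.sqrt ‖A⁻¹‖ * (‖Xᵀ‖ * (Real.sqrt ‖D⁻¹‖ * αc))) :=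
          mul_le_mul hq h3a (wnorm_nonneg _ _) hαq
      _ = αq * αc * ‖Xᵀ‖ * ‖A⁻¹‖ ^ ((1 : ℝ) / 2) * ‖D⁻¹‖ ^ ((1 : ℝ) / 2) := by
          rw [← Real.sqrt_eq_rpow, ← Real.sqrt_eq_rpow]
          ring
  have hdec1 : chat ⬝ᵥ Xᵀ.mulVec qhat - cstar ⬝ᵥ Xᵀ.mulVec qstar
      = (chat - cstar) ⬝ᵥ Xᵀ.mulVec qhat + cstar ⬝ᵥ Xᵀ.mulVec z := by
    simp only [hz, sub_dotProduct, Matrix.mulVec_sub, dotProduct_sub]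
    ring
  have hdec2 : chat ⬝ᵥ Xᵀ.mulVec qhat - cstar ⬝ᵥ Xᵀ.mulVec qstar
      = (chat - cstar) ⬝ᵥ Xᵀ.mulVec qhat + chat ⬝ᵥ Xᵀ.mulVec z + w ⬝ᵥ Xᵀ.mulVec z := by
    simp only [hz, hw2, sub_dotProduct, Matrix.mulVec_sub, dotProduct_sub]
    ring
  constructor
  · rw [hdec1]
    have habs : |(chat - cstar) ⬝ᵥ Xᵀ.mulVec qhat + cstar ⬝ᵥ Xᵀ.mulVec z|
        ≤ |(chat - cstar) ⬝ᵥ Xᵀ.mulVec qhat| + |cstar ⬝ᵥ Xᵀ.mulVec z| := abs_add_le _ _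
    have h3nn : 0 ≤ wnorm A z * wnorm A⁻¹ (X.mulVec w) :=
      mul_nonneg (wnorm_nonneg _ _) (wnorm_nonneg _ _)
    linarith [hT1, hT2 cstar]
  · rw [hdec2]
    have habs := abs_add_three ((chat - cstar) ⬝ᵥ Xᵀ.mulVec qhat)
      (chat ⬝ᵥ Xᵀ.mulVec z) (w ⬝ᵥ Xᵀ.mulVec z)
    linarith [hT1, hT2 chat, hT3]
end

section
/- Let A, B be symmetric positive definite d×d matrices with B ⪯ A. Then for every nonzero x ∈ ℝ^d, (xᵀA⁻¹x)/(xᵀB⁻¹x) ≥ det(B)/det(A). Equivalently, xᵀB⁻¹x ≤ (det(A)/det(B))·xᵀA⁻¹x. -/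
open Matrix Finset

private lemma quad_conj {d : ℕ} (P N : Matrix (Fin d) (Fin d) ℝ) (hP : Pᵀ = P)
    (x : Fin d → ℝ) :
    (P *ᵥ x) ⬝ᵥ (N *ᵥ (P *ᵥ x)) = x ⬝ᵥ ((P * N * P) *ᵥ x) := by
  rw [← mulVec_mulVec, ← mulVec_mulVec, dotProduct_mulVec x, ← mulVec_transpose, hP]

private lemma key_lemma {d : ℕ} (M : Matrix (Fin d) (Fin d) ℝ) (hM : M.PosDef)
    (h1 : (1 - M).PosSemidef) (y : Fin d → ℝ) :
    y ⬝ᵥ M⁻¹ *ᵥ y ≤ (M.det)⁻¹ * (y ⬝ᵥ y) := by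
  have hH : M.IsHermitian := hM.1
  set U : Matrix (Fin d) (Fin d) ℝ := (hH.eigenvectorUnitary : Matrix (Fin d) (Fin d) ℝ) with hU
  set μ : Fin d → ℝ := hH.eigenvalues with hμ
  have hμpos : ∀ i, 0 < μ i := hM.eigenvalues_pos
  have hμle : ∀ i, μ i ≤ 1 := by
    intro i
    have hv := hH.mulVec_eigenvectorBasis i
    set v : Fin d → ℝ := ⇑(hH.eigenvectorBasis i) with hvdef
    have hvv : v ⬝ᵥ v = 1 := by
      have h1' : (inner ℝ (hH.eigenvectorBasis i) (hH.eigenvectorBasis i) : ℝ) = 1 := by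
        rw [real_inner_self_eq_norm_sq, hH.eigenvectorBasis.orthonormal.1 i]; norm_num
      simp only [PiLp.inner_apply, RCLike.inner_apply, conj_trivial] at h1'
      rw [hvdef]; simpa only [dotProduct, mul_comm] using h1'
    have h2 := h1.dotProduct_mulVec_nonneg v
    rw [sub_mulVec, one_mulVec, hv] at h2
    simp only [star_trivial, dotProduct_sub, dotProduct_smul, smul_eq_mul, hvv, mul_one] at h2
    linarith
  have hUU : U * star U = 1 := (Matrix.mem_unitaryGroup_iff).mp hH.eigenvectorUnitary.2
  have hUU' : star U * U = 1 := (Matrix.mem_unitaryGroup_iff').mp hH.eigenvectorUnitary.2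
  have hUinv : U⁻¹ = star U := inv_eq_left_inv hUU'
  have hsUinv : (star U)⁻¹ = U := inv_eq_left_inv hUU
  have hsp : M = U * diagonal μ * star U := by
    have := hH.spectral_theorem
    simpa [hμ] using this
  have hDinv : (diagonal μ)⁻¹ = diagonal (fun i => (μ i)⁻¹) := by
    apply inv_eq_left_inv
    rw [diagonal_mul_diagonal]
    convert diagonal_one with i
    exact inv_mul_cancel₀ (hμpos i).ne'
  have hMinv : M⁻¹ = U * diagonal (fun i => (μ i)⁻¹) * star U := by
    rw [hsp, Matrix.mul_inv_rev, Matrix.mul_inv_rev, hUinv, hsUinv, hDinv, Matrix.mul_assoc]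
  set c : ℝ := (M.det)⁻¹ with hc
  have hdet : M.det = ∏ i, μ i := by
    have := hH.det_eq_prod_eigenvalues
    simpa [hμ] using this
  have hcprod : c = ∏ i, (μ i)⁻¹ := by
    rw [hc, hdet, ← Finset.prod_inv_distrib]
  have hkey : ∀ i, (μ i)⁻¹ ≤ c := by
    intro i
    have hone : ∀ j, 1 ≤ (μ j)⁻¹ := by
      intro j
      have h := mul_le_mul_of_nonneg_right (hμle j) (inv_nonneg.2 (hμpos j).le)
      rwa [mul_inv_cancel₀ (hμpos j).ne', one_mul] at h
    rw [hcprod, ← Finset.mul_prod_erase Finset.univ _ (Finset.mem_univ i)]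
    have hrest : 1 ≤ ∏ j ∈ Finset.univ.erase i, (μ j)⁻¹ := by
      have h := Finset.prod_le_prod (s := Finset.univ.erase i)
        (f := fun _ => (1:ℝ)) (g := fun j => (μ j)⁻¹)
        (fun j _ => by norm_num) (fun j _ => hone j)
      simpa using h
    exact le_mul_of_one_le_right (inv_nonneg.2 (hμpos i).le) hrest
  have hpsd : (c • (1 : Matrix (Fin d) (Fin d) ℝ) - M⁻¹).PosSemidef := by
    have hdiag : (diagonal (fun i => c - (μ i)⁻¹)).PosSemidef :=
      posSemidef_diagonal_iff.mpr fun i => sub_nonneg.mpr (hkey i)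
    have hps := hdiag.mul_mul_conjTranspose_same U
    have heq : U * diagonal (fun i => c - (μ i)⁻¹) * Uᴴ
        = c • (1 : Matrix (Fin d) (Fin d) ℝ) - M⁻¹ := by
      have hd : diagonal (fun i => c - (μ i)⁻¹)
          = c • (1 : Matrix (Fin d) (Fin d) ℝ) - diagonal (fun i => (μ i)⁻¹) := by
        rw [smul_one_eq_diagonal, ← diagonal_sub]
      rw [← Matrix.star_eq_conjTranspose, hd, Matrix.mul_sub, Matrix.sub_mul, hMinv,
        Matrix.mul_smul, Matrix.smul_mul, Matrix.mul_one, hUU]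
    rwa [heq] at hps
  have h3 := hpsd.dotProduct_mulVec_nonneg y
  rw [sub_mulVec, smul_mulVec, one_mulVec] at h3
  simp only [star_trivial, dotProduct_sub, dotProduct_smul, smul_eq_mul] at h3
  linarith

theorem determinant_ratio_quadratic_form_comparison {d : ℕ}
    (A B : Matrix (Fin d) (Fin d) ℝ)
    (hA : A.PosDef) (hB : B.PosDef) (hBA : (A - B).PosSemidef) :
    ∀ x : Fin d → ℝ, x ≠ 0 →
      (B.det / A.det ≤ (x ⬝ᵥ A⁻¹.mulVec x) / (x ⬝ᵥ B⁻¹.mulVec x) ∧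
       x ⬝ᵥ B⁻¹.mulVec x ≤ (A.det / B.det) * (x ⬝ᵥ A⁻¹.mulVec x)) := by
  intro x hx
  have hAps := hA.posSemidef
  set S : Matrix (Fin d) (Fin d) ℝ := (open scoped MatrixOrder in CFC.sqrt A) with hSdef
  have hS : S.PosSemidef := (open scoped MatrixOrder in (CFC.sqrt_nonneg A).posSemidef)
  have hSS : S * S = A := (open scoped MatrixOrder in CFC.sqrt_mul_sqrt_self A hAps.nonneg)
  have hdetA : 0 < A.det := hA.det_pos
  have hdetB : 0 < B.det := hB.det_pos
  have hdetS : S.det * S.det = A.det := by rw [← det_mul, hSS]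
  have hdS : S.det ≠ 0 := by
    intro h
    rw [h, mul_zero] at hdetS
    exact hdetA.ne' hdetS.symm
  have hSunit : IsUnit S.det := isUnit_iff_ne_zero.mpr hdS
  have hSinv : S⁻¹ * S = 1 := nonsing_inv_mul S hSunit
  have hSinv' : S * S⁻¹ = 1 := mul_nonsing_inv S hSunit
  have hSsym : Sᵀ = S := hS.1
  have hSisym : (S⁻¹)ᵀ = S⁻¹ := by rw [transpose_nonsing_inv, hSsym]
  have hBsym : Bᵀ = B := hB.1
  set M : Matrix (Fin d) (Fin d) ℝ := S⁻¹ * B * S⁻¹ with hMdef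
  have h1M : S⁻¹ * A * S⁻¹ = 1 := by
    rw [← hSS, ← Matrix.mul_assoc, Matrix.mul_assoc (S⁻¹ * S), hSinv, hSinv', Matrix.one_mul]
  have hMpd : M.PosDef := by
    apply PosDef.of_dotProduct_mulVec_pos
    · show Mᴴ = M
      rw [Matrix.conjTranspose_eq_transpose_of_trivial]
      rw [hMdef, Matrix.transpose_mul, Matrix.transpose_mul, hSisym, hBsym, Matrix.mul_assoc]
    · intro y hy
      have hz : S⁻¹ *ᵥ y ≠ 0 := by
        intro h
        apply hy
        have : S *ᵥ (S⁻¹ *ᵥ y) = y := by rw [mulVec_mulVec, hSinv', one_mulVec]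
        rw [h, mulVec_zero] at this
        exact this.symm
      have h := hB.dotProduct_mulVec_pos hz
      have hq := quad_conj S⁻¹ B hSisym y
      simp only [star_trivial] at h ⊢
      rw [← hq]
      exact h
  have h1sub : (1 - M).PosSemidef := by
    have hps := hBA.conjTranspose_mul_mul_same S⁻¹
    rw [Matrix.conjTranspose_eq_transpose_of_trivial, hSisym] at hps
    have heq : S⁻¹ * (A - B) * S⁻¹ = 1 - M := by
      rw [Matrix.mul_sub, Matrix.sub_mul, h1M]
    rwa [heq] at hps
  have hMinv : M⁻¹ = S * B⁻¹ * S := by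
    rw [hMdef, Matrix.mul_inv_rev, Matrix.mul_inv_rev,
      nonsing_inv_nonsing_inv S hSunit, Matrix.mul_assoc]
  have hdetM : M.det = B.det / A.det := by
    rw [hMdef, det_mul, det_mul, det_nonsing_inv, Ring.inverse_eq_inv', ← hdetS]
    field_simp
  set y : Fin d → ℝ := S⁻¹ *ᵥ x with hydef
  have hmid1 : S⁻¹ * (S * B⁻¹ * S) * S⁻¹ = B⁻¹ := by
    simp only [← Matrix.mul_assoc]
    rw [hSinv, Matrix.one_mul, Matrix.mul_assoc, hSinv', Matrix.mul_one]
  have hq1 : y ⬝ᵥ M⁻¹ *ᵥ y = x ⬝ᵥ B⁻¹ *ᵥ x := by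
    rw [hMinv, hydef, quad_conj S⁻¹ (S * B⁻¹ * S) hSisym x, hmid1]
  have hq2 : y ⬝ᵥ y = x ⬝ᵥ A⁻¹ *ᵥ x := by
    have h1 : y ⬝ᵥ (1 : Matrix (Fin d) (Fin d) ℝ) *ᵥ y = y ⬝ᵥ y := by rw [one_mulVec]
    have hmid2 : S⁻¹ * (1 : Matrix (Fin d) (Fin d) ℝ) * S⁻¹ = A⁻¹ := by
      rw [Matrix.mul_one, ← Matrix.mul_inv_rev, hSS]
    rw [← h1, hydef, quad_conj S⁻¹ 1 hSisym x, hmid2]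
  have hk := key_lemma M hMpd h1sub y
  rw [hq1, hq2, hdetM, inv_div] at hk
  have hxB : 0 < x ⬝ᵥ B⁻¹ *ᵥ x := by
    have := hB.inv.dotProduct_mulVec_pos hx
    simpa using this
  have hxA : 0 < x ⬝ᵥ A⁻¹ *ᵥ x := by
    have := hA.inv.dotProduct_mulVec_pos hx
    simpa using this
  refine ⟨?_, hk⟩
  rw [div_le_div_iff₀ hdetA hxB]
  rw [div_mul_eq_mul_div, le_div_iff₀ hdetB] at hk
  nlinarith [hk]
end
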